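/- With H_S as in the degenerate donor-acceptor model, any vector ψ in the span of {|Dⱼ⟩} orthogonal to |D⟩ satisfies H_S ψ = E_D ψ, and any vector φ in the span of {|Aₖ⟩} orthogonal to |A⟩ satisfies H_S φ = E_A φ. In particular the spectrum of H_S consists of E_D (multiplicity N_D−1), E_A (multiplicity N_A−1), and the two eigenvalues e_{1,2} = (E_D+E_A ± √((E_D−E_A)²+4v²))/2 with v = V√(N_D N_A). -/

import Mathlib

open Matrix Polynomial
open scoped BigOperators

/-!
In the donor/acceptor splitting, `H_S` is the block matrix `[[E_D • 1, V • J], [V • Jᵀ, E_A • 1]]`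
with `J` the all-ones matrix. A donor vector orthogonal to `|D⟩` has coordinate sum zero, so the
off-diagonal blocks kill it and it is an `E_D`-eigenvector; likewise for acceptor vectors.
For the characteristic polynomial, the Schur complement of `(X - E_D) • 1` is a scalar matrix plus
a rank-one matrix, whence
`charpoly H_S = (X - E_D)^(N_D-1) (X - E_A)^(N_A-1) ((X - E_D)(X - E_A) - v²)`,
and `e₁, e₂` are the roots of the quadratic factor.
-/

namespace Matrix

variable {m n : Type*} [Fintype m] [Fintype n]

section Orthogonality

variable {R : Type*} [Semiring R] [StarRing R] [NoZeroDivisors R]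

theorem sum_inl_eq_zero_of_star_dotProduct_eq_zero (x : m ⊕ n → R) {r : R} (hr : r ≠ 0)
    (h : star x ⬝ᵥ Sum.elim (fun _ => r) (fun _ => 0) = 0) : ∑ j, x (Sum.inl j) = 0 := by
  have hstar : star (∑ j, x (Sum.inl j)) * r = 0 := by
    simpa [dotProduct, Fintype.sum_sum_type, star_sum, Finset.sum_mul] using h
  exact star_eq_zero.mp ((mul_eq_zero.mp hstar).resolve_right hr)

theorem sum_inr_eq_zero_of_star_dotProduct_eq_zero (x : m ⊕ n → R) {r : R} (hr : r ≠ 0)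
    (h : star x ⬝ᵥ Sum.elim (fun _ => 0) (fun _ => r) = 0) : ∑ k, x (Sum.inr k) = 0 := by
  have hstar : star (∑ k, x (Sum.inr k)) * r = 0 := by
    simpa [dotProduct, Fintype.sum_sum_type, star_sum, Finset.sum_mul] using h
  exact star_eq_zero.mp ((mul_eq_zero.mp hstar).resolve_right hr)

end Orthogonality

variable [DecidableEq m] [DecidableEq n]

section Eigenvectors

variable {R : Type*} [Semiring R] {a b c d : R}

theorem fromBlocks_smul_one_const_mulVec_of_inl (ψ : m ⊕ n → R) (hψ : ∀ k, ψ (Sum.inr k) = 0)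
    (hsum : ∑ j, ψ (Sum.inl j) = 0) :
    fromBlocks (a • 1 : Matrix m m R) (of fun _ _ => c) (of fun _ _ => d) (b • 1 : Matrix n n R)
      *ᵥ ψ = a • ψ := by
  ext (j | k) <;> simp [mulVec, dotProduct, one_apply, hψ, ← Finset.mul_sum, hsum]

theorem fromBlocks_smul_one_const_mulVec_of_inr (φ : m ⊕ n → R) (hφ : ∀ j, φ (Sum.inl j) = 0)
    (hsum : ∑ k, φ (Sum.inr k) = 0) :
    fromBlocks (a • 1 : Matrix m m R) (of fun _ _ => c) (of fun _ _ => d) (b • 1 : Matrix n n R)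
      *ᵥ φ = b • φ := by
  ext (j | k) <;> simp [mulVec, dotProduct, one_apply, hφ, ← Finset.mul_sum, hsum]

end Eigenvectors

theorem det_smul_one_add_vecMulVec {K : Type*} [Field K] {b : K} (hb : b ≠ 0) (u v : m → K) :
    det (b • 1 + vecMulVec u v) = b ^ Fintype.card m * (1 + b⁻¹ * (v ⬝ᵥ u)) := by
  have hfactor : b • 1 + vecMulVec u v =
      b • (1 + replicateCol Unit (b⁻¹ • u) * replicateRow Unit v) := by
    rw [← vecMulVec_eq, smul_add, smul_one_eq_diagonal]
    ext i j
    simp [vecMulVec_apply, hb]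
  rw [hfactor, det_smul, det_one_add_replicateCol_mul_replicateRow, dotProduct_smul, smul_eq_mul]

theorem det_fromBlocks_smul_one_const {K : Type*} [Field K] [Nonempty m] [Nonempty n] {a b : K}
    (ha : a ≠ 0) (hb : b ≠ 0) (c d : K) :
    det (fromBlocks (a • 1 : Matrix m m K) (of fun _ _ => c) (of fun _ _ => d)
      (b • 1 : Matrix n n K)) =
      a ^ (Fintype.card m - 1) * b ^ (Fintype.card n - 1) *
        (a * b - c * d * Fintype.card m * Fintype.card n) := by
  have hfactor : fromBlocks (a • 1 : Matrix m m K) (of fun _ _ => c) (of fun _ _ => d)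
      (b • 1 : Matrix n n K) =
      fromBlocks (a • 1) 0 0 1 * fromBlocks 1 (of fun _ _ => a⁻¹ * c) (of fun _ _ => d) (b • 1) := by
    rw [fromBlocks_multiply]
    congr 1 <;> ext <;> simp [ha]
  have hschur : b • (1 : Matrix n n K) -
      (of fun _ _ => d : Matrix n m K) * (of fun _ _ => a⁻¹ * c : Matrix m n K) =
      b • 1 + vecMulVec (fun _ => -(a⁻¹ * c * d * Fintype.card m)) (fun _ => 1) := by
    ext i j
    rw [sub_apply, mul_apply]
    simp [vecMulVec_apply, sub_eq_add_neg]
    ring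
  rw [hfactor, det_mul, det_fromBlocks_zero₂₁, det_fromBlocks_one₁₁, hschur,
    det_smul_one_add_vecMulVec hb, det_smul, det_one, det_one]
  obtain ⟨k, hk⟩ := Nat.exists_eq_add_one_of_ne_zero (Fintype.card_ne_zero (α := m))
  obtain ⟨l, hl⟩ := Nat.exists_eq_add_one_of_ne_zero (Fintype.card_ne_zero (α := n))
  simp only [hk, hl, dotProduct, one_mul, Finset.sum_const, Finset.card_univ, nsmul_eq_mul]
  push_cast
  field_simp
  ring

theorem charpoly_fromBlocks_smul_one_const {R : Type*} [CommRing R] [IsDomain R]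
    [Nonempty m] [Nonempty n] (a b c d : R) :
    charpoly (fromBlocks (a • 1 : Matrix m m R) (of fun _ _ => c) (of fun _ _ => d)
      (b • 1 : Matrix n n R)) =
      (X - C a) ^ (Fintype.card m - 1) * (X - C b) ^ (Fintype.card n - 1) *
        ((X - C a) * (X - C b) - C (c * d * Fintype.card m * Fintype.card n)) := by
  have hcharmatrix : charmatrix (fromBlocks (a • 1 : Matrix m m R) (of fun _ _ => c)
      (of fun _ _ => d) (b • 1 : Matrix n n R)) =
      fromBlocks ((X - C a) • 1) (of fun _ _ => -C c) (of fun _ _ => -C d) ((X - C b) • 1) := by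
    rw [charmatrix_fromBlocks]
    congr 1 <;> ext i j <;> by_cases hij : i = j <;> simp [hij]
  -- the Schur complement needs `X - C a` to be invertible, so compute in the fraction field
  let f := algebraMap R[X] (FractionRing R[X])
  have hX (r : R) : f (X - C r) ≠ 0 :=
    (map_ne_zero_iff f (IsFractionRing.injective _ _)).mpr (X_sub_C_ne_zero r)
  have hmap : (fromBlocks ((X - C a) • 1 : Matrix m m R[X]) (of fun _ _ => -C c)
      (of fun _ _ => -C d) ((X - C b) • 1 : Matrix n n R[X])).map f =
      fromBlocks (f (X - C a) • 1) (of fun _ _ => f (-C c)) (of fun _ _ => f (-C d))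
        (f (X - C b) • 1) := by
    rw [fromBlocks_map]
    congr 1 <;> ext i j <;> by_cases hij : i = j <;> simp [hij]
  apply IsFractionRing.injective R[X] (FractionRing R[X])
  rw [charpoly, hcharmatrix, RingHom.map_det, RingHom.mapMatrix_apply, hmap,
    det_fromBlocks_smul_one_const (hX a) (hX b)]
  simp only [f, map_mul, map_sub, map_pow, map_neg, map_natCast, neg_mul_neg]

end Matrix

namespace Polynomial

theorem X_sub_C_mul_X_sub_C_sub_C_eq_of_vieta {R : Type*} [CommRing R] {p q s t w : R}
    (hsum : s + t = p + q) (hprod : s * t = p * q - w) :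
    (X - C p) * (X - C q) - C w = (X - C s) * (X - C t) := by
  have hsumC := congrArg C hsum
  have hprodC := congrArg C hprod
  simp only [map_add, map_mul, map_sub] at hsumC hprodC
  linear_combination X * hsumC - hprodC

theorem X_sub_C_mul_X_sub_C_sub_C_sq_eq (p q v : ℝ) :
    (X - C (p : ℂ)) * (X - C (q : ℂ)) - C ((v : ℂ) ^ 2) =
      (X - C (((p + q + √((p - q) ^ 2 + 4 * v ^ 2)) / 2 : ℝ) : ℂ)) *
        (X - C (((p + q - √((p - q) ^ 2 + 4 * v ^ 2)) / 2 : ℝ) : ℂ)) := by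
  have hdisc := congrArg ((↑) : ℝ → ℂ) (Real.sq_sqrt (by positivity : 0 ≤ (p - q) ^ 2 + 4 * v ^ 2))
  apply X_sub_C_mul_X_sub_C_sub_C_eq_of_vieta
  · push_cast
    ring
  · push_cast at hdisc ⊢
    linear_combination (-1 / 4 : ℂ) * hdisc

end Polynomial

theorem stmt9 (N_D N_A : ℕ) (hND : 0 < N_D) (hNA : 0 < N_A) (E_D E_A V : ℝ)
    (H : Matrix (Fin N_D ⊕ Fin N_A) (Fin N_D ⊕ Fin N_A) ℂ)
    (hH : ∀ a b, H a b =
      match a, b with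
      | Sum.inl j, Sum.inl j' => if j = j' then (E_D : ℂ) else 0
      | Sum.inr k, Sum.inr k' => if k = k' then (E_A : ℂ) else 0
      | _, _ => (V : ℂ))
    (D A : (Fin N_D ⊕ Fin N_A) → ℂ)
    (hD : D = Sum.elim (fun _ => (((Real.sqrt N_D)⁻¹ : ℝ) : ℂ)) (fun _ => 0))
    (hA : A = Sum.elim (fun _ => 0) (fun _ => (((Real.sqrt N_A)⁻¹ : ℝ) : ℂ)))
    (v e₁ e₂ : ℝ) (hv : v = V * Real.sqrt ((N_D : ℝ) * N_A))
    (he₁ : e₁ = (E_D + E_A + Real.sqrt ((E_D - E_A) ^ 2 + 4 * v ^ 2)) / 2)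
    (he₂ : e₂ = (E_D + E_A - Real.sqrt ((E_D - E_A) ^ 2 + 4 * v ^ 2)) / 2) :
    (∀ ψ : (Fin N_D ⊕ Fin N_A) → ℂ, (∀ k, ψ (Sum.inr k) = 0) →
      star ψ ⬝ᵥ D = 0 → H.mulVec ψ = (E_D : ℂ) • ψ) ∧
    (∀ φ : (Fin N_D ⊕ Fin N_A) → ℂ, (∀ j, φ (Sum.inl j) = 0) →
      star φ ⬝ᵥ A = 0 → H.mulVec φ = (E_A : ℂ) • φ) ∧
    H.charpoly = (X - C (E_D : ℂ)) ^ (N_D - 1) * (X - C (E_A : ℂ)) ^ (N_A - 1) *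
      (X - C (e₁ : ℂ)) * (X - C (e₂ : ℂ)) := by
  have hblocks : H = fromBlocks ((E_D : ℂ) • 1) (of fun _ _ => (V : ℂ)) (of fun _ _ => (V : ℂ))
      ((E_A : ℂ) • 1) := by
    ext (i | i) (j | j) <;> simp [hH, one_apply]
  have hnorm {N : ℕ} (hN : 0 < N) : (((Real.sqrt N)⁻¹ : ℝ) : ℂ) ≠ 0 := by
    simpa using hN.ne'
  have hv2 : v ^ 2 = V * V * N_D * N_A := by
    rw [hv, mul_pow, Real.sq_sqrt (by positivity)]
    ring
  have : Nonempty (Fin N_D) := Fin.pos_iff_nonempty.mp hND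
  have : Nonempty (Fin N_A) := Fin.pos_iff_nonempty.mp hNA
  subst hblocks hD hA he₁ he₂
  refine ⟨fun ψ hψ horth => ?_, fun φ hφ horth => ?_, ?_⟩
  · exact fromBlocks_smul_one_const_mulVec_of_inl ψ hψ
      (sum_inl_eq_zero_of_star_dotProduct_eq_zero ψ (hnorm hND) horth)
  · exact fromBlocks_smul_one_const_mulVec_of_inr φ hφ
      (sum_inr_eq_zero_of_star_dotProduct_eq_zero φ (hnorm hNA) horth)
  · rw [charpoly_fromBlocks_smul_one_const, Fintype.card_fin, Fintype.card_fin,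
      show (V : ℂ) * V * N_D * N_A = (v : ℂ) ^ 2 by exact_mod_cast hv2.symm, mul_assoc _ (X - C _),
      X_sub_C_mul_X_sub_C_sub_C_sq_eq]
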